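/- arXiv:0709.2670 — 3 statements merged into one kernel-verified Lean document; each statement's English description precedes it below -/
import Mathlib

section
/- If (g,≺) is a maximally delayed causal flow of (G,I,O), then V₁^≺ = { u ∈ V∖O : ∃v ∈ O∖I, N(v) ∩ (V∖O) = {u} }. -/
open Set

variable {V : Type*}

def oddN (G : SimpleGraph V) (K : Set V) : Set V :=
  {u | Odd {v | v ∈ K ∧ G.Adj u v}.ncard}

def IsSPO (lt : V → V → Prop) : Prop :=
  (∀ a, ¬ lt a a) ∧ (∀ a b c, lt a b → lt b c → lt a c)

def IsCausalFlow (G : SimpleGraph V) (I O : Set V) (g : V → V) (lt : V → V → Prop) : Prop :=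
  IsSPO lt ∧ (∀ i, i ∉ O → g i ∉ I) ∧ (∀ i, i ∉ O → lt i (g i)) ∧
  (∀ i, i ∉ O → ∀ j, G.Adj (g i) j → j = i ∨ lt i j) ∧
  (∀ i, i ∉ O → G.Adj (g i) i)

def IsGFlow (G : SimpleGraph V) (I O : Set V) (g : V → Set V) (lt : V → V → Prop) : Prop :=
  IsSPO lt ∧ (∀ i, i ∉ O → (g i).Nonempty ∧ g i ∩ I = ∅) ∧
  (∀ i, i ∉ O → ∀ j ∈ g i, lt i j) ∧
  (∀ i, i ∉ O → ∀ j ∈ oddN G (g i), j = i ∨ lt i j) ∧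
  (∀ i, i ∉ O → i ∈ oddN G (g i))

def maxSet (lt : V → V → Prop) (X : Set V) : Set V :=
  {u ∈ X | ∀ v ∈ X, ¬ lt u v}

def rest (lt : V → V → Prop) : ℕ → Set V
  | 0 => Set.univ
  | k+1 => rest lt k \ maxSet lt (rest lt k)

def layer (lt : V → V → Prop) (k : ℕ) : Set V := maxSet lt (rest lt k)

def cumul (lt : V → V → Prop) (k : ℕ) : Set V := Set.univ \ rest lt (k+1)

def MoreDelayed (lt lt' : V → V → Prop) : Prop :=
  (∀ k, (cumul lt' k).ncard ≤ (cumul lt k).ncard) ∧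
  ∃ k, (cumul lt' k).ncard < (cumul lt k).ncard

noncomputable def flowDepth (lt : V → V → Prop) : ℕ := sInf {d | layer lt (d+1) = ∅}

def MaxDelayedCausalFlow (G : SimpleGraph V) (I O : Set V) (g : V → V) (lt : V → V → Prop) : Prop :=
  IsCausalFlow G I O g lt ∧
  ∀ g' lt', IsCausalFlow G I O g' lt' → ¬ MoreDelayed lt' lt

def MaxDelayedGFlow (G : SimpleGraph V) (I O : Set V) (g : V → Set V) (lt : V → V → Prop) : Prop :=
  IsGFlow G I O g lt ∧
  ∀ g' lt', IsGFlow G I O g' lt' → ¬ MoreDelayed lt' lt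

/-!
Replace `≺` by `a ≺' b ↔ a ∉ O ∧ (b ∈ O ∨ (a ∉ U ∧ a ≺ b))`. This puts exactly the outputs
into `V₀`, leaves the vertices of `U` only output successors, and gives no vertex a larger layer
index than `≺` does; so whenever `(g', ≺')` is again a causal flow, maximality of `(g, ≺)` forces
equal layers. For `U = ∅`, `g' = g` this gives `V₀^≺ = O`, so `V₁^≺` consists of the non-outputs
without non-output successors. Such a `u` has `g u ∈ O \ I`, and the flow condition at `g u` makes
`u` its only non-output neighbour. Conversely, if `u` is the only non-output neighbour of some
`v ∈ O \ I`, taking `U = {u}` and redirecting `g` at `u` to `v` gives a causal flow with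
`u ∈ V₁^≺'`.
-/

section Layers

variable {lt lt' : V → V → Prop}

lemma mem_rest_succ {k : ℕ} {a : V} :
    a ∈ rest lt (k + 1) ↔ a ∈ rest lt k ∧ ∃ b ∈ rest lt k, lt a b := by
  simp [rest, maxSet]

lemma rest_antitone (lt : V → V → Prop) : Antitone (rest lt) :=
  antitone_nat_of_succ_le fun _ _ ha => (mem_rest_succ.1 ha).1

lemma rest_subset_rest (h1 : rest lt' 1 ⊆ rest lt 1)
    (h : ∀ a ∈ rest lt' 1, ∀ b ∈ rest lt' 1, lt' a b → lt a b) : ∀ k, rest lt' k ⊆ rest lt k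
  | 0 => subset_rfl
  | 1 => h1
  | k + 2 => fun a ha => by
    obtain ⟨ha, b, hb, hab⟩ := mem_rest_succ.1 ha
    have hsub := rest_subset_rest h1 h (k + 1)
    have hle := rest_antitone lt' (show 1 ≤ k + 1 by omega)
    exact mem_rest_succ.2 ⟨hsub ha, b, hsub hb, h a (hle ha) b (hle hb) hab⟩

lemma moreDelayed_of_rest_subset [Finite V] (hsub : ∀ k, rest lt' k ⊆ rest lt k) {k : ℕ} {x : V}
    (hx : x ∈ rest lt (k + 1)) (hx' : x ∉ rest lt' (k + 1)) : MoreDelayed lt' lt := by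
  have hcumul : ∀ k, cumul lt k ⊆ cumul lt' k := fun k => sdiff_subset_sdiff_right (hsub (k + 1))
  exact ⟨fun k => ncard_le_ncard (hcumul k), k,
    ncard_lt_ncard ⟨hcumul k, fun h => (h ⟨mem_univ x, hx'⟩).2 hx⟩⟩

end Layers

def outputsLast (O U : Set V) (lt : V → V → Prop) (a b : V) : Prop :=
  a ∉ O ∧ (b ∈ O ∨ (a ∉ U ∧ lt a b))

section CausalFlow

variable {G : SimpleGraph V} {I O : Set V} {g : V → V} {lt : V → V → Prop}

lemma rest_one_subset_compl (hlt : ∀ a b, lt a b → a ∉ O) : rest lt 1 ⊆ Oᶜ := fun _ ha =>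
  let ⟨_, _, _, hab⟩ := mem_rest_succ.1 ha
  hlt _ _ hab

lemma IsCausalFlow.compl_subset_rest_one (hf : IsCausalFlow G I O g lt) : Oᶜ ⊆ rest lt 1 :=
  fun a ha => mem_rest_succ.2 ⟨mem_univ a, g a, mem_univ _, hf.2.2.1 a ha⟩

lemma rest_outputsLast_subset (h : Oᶜ ⊆ rest lt 1) (U : Set V) (k : ℕ) :
    rest (outputsLast O U lt) k ⊆ rest lt k := by
  have h1 : rest (outputsLast O U lt) 1 ⊆ Oᶜ := rest_one_subset_compl fun _ _ hab => hab.1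
  refine rest_subset_rest (h1.trans h) (fun _ _ b hb hab => ?_) k
  rcases hab.2 with hbO | ⟨-, hab⟩
  · exact absurd hbO (h1 hb)
  · exact hab

lemma IsCausalFlow.outputsLast (hf : IsCausalFlow G I O g lt) {U : Set V} {g' : V → V}
    (hg' : ∀ i ∉ U, g' i = g i)
    (hU : ∀ i ∈ U, i ∉ O → g' i ∈ O \ I ∧ G.neighborSet (g' i) ∩ Oᶜ = {i}) :
    IsCausalFlow G I O g' (outputsLast O U lt) := by
  obtain ⟨⟨hirrefl, htrans⟩, hI, hlt, hnb, hadj⟩ := hf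
  refine ⟨⟨?_, ?_⟩, fun i hi => ?_, fun i hi => ⟨hi, ?_⟩, fun i hi j hj => ?_, fun i hi => ?_⟩
  · rintro a ⟨haO, haO' | ⟨-, haa⟩⟩
    exacts [haO haO', hirrefl a haa]
  · rintro a b c ⟨haO, hbO | ⟨haU, hab⟩⟩ ⟨hbO', hc⟩
    · exact absurd hbO hbO'
    · exact ⟨haO, hc.imp_right fun ⟨_, hbc⟩ => ⟨haU, htrans a b c hab hbc⟩⟩
  all_goals by_cases hiU : i ∈ U
  · exact (hU i hiU hi).1.2
  · exact hg' i hiU ▸ hI i hi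
  · exact Or.inl (hU i hiU hi).1.1
  · exact Or.inr ⟨hiU, hg' i hiU ▸ hlt i hi⟩
  · by_cases hjO : j ∈ O
    · exact Or.inr ⟨hi, Or.inl hjO⟩
    · exact Or.inl ((hU i hiU hi).2 ▸ ⟨hj, hjO⟩ : j ∈ ({i} : Set V))
  · rw [hg' i hiU] at hj
    exact (hnb i hi j hj).imp_right fun hij => ⟨hi, Or.inr ⟨hiU, hij⟩⟩
  · exact ((hU i hiU hi).2 ▸ rfl : i ∈ G.neighborSet (g' i) ∩ Oᶜ).1
  · exact hg' i hiU ▸ hadj i hi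

lemma IsCausalFlow.neighborSet_flow_inter_compl (hf : IsCausalFlow G I O g lt) {u : V}
    (hu : u ∉ O) (hmax : ∀ w ∉ O, ¬ lt u w) :
    g u ∈ O \ I ∧ G.neighborSet (g u) ∩ Oᶜ = {u} := by
  obtain ⟨-, hI, hlt, hnb, hadj⟩ := hf
  have hgu : g u ∈ O := by_contra fun hgu => hmax _ hgu (hlt u hu)
  refine ⟨⟨hgu, hI u hu⟩, Subset.antisymm (fun w ⟨hw, hwO⟩ => ?_) ?_⟩
  · exact (hnb u hu w hw).resolve_right (hmax w hwO)
  · rintro w rfl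
    exact ⟨hadj w hu, hu⟩

variable [Finite V]

lemma MaxDelayedCausalFlow.rest_eq (h : MaxDelayedCausalFlow G I O g lt) {g' : V → V}
    {lt' : V → V → Prop} (hf' : IsCausalFlow G I O g' lt') (hsub : ∀ k, rest lt' k ⊆ rest lt k)
    (k : ℕ) : rest lt' k = rest lt k := by
  refine (hsub k).antisymm fun x hx => ?_
  by_contra hx'
  cases k with
  | zero => exact hx' (mem_univ x)
  | succ k => exact h.2 g' lt' hf' (moreDelayed_of_rest_subset hsub hx hx')

lemma MaxDelayedCausalFlow.rest_one (h : MaxDelayedCausalFlow G I O g lt) : rest lt 1 = Oᶜ := by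
  have hf := h.1.outputsLast (U := ∅) (g' := g) (fun _ _ => rfl) (by simp)
  rw [← h.rest_eq hf (rest_outputsLast_subset h.1.compl_subset_rest_one ∅)]
  exact (rest_one_subset_compl fun _ _ hab => hab.1).antisymm hf.compl_subset_rest_one

lemma MaxDelayedCausalFlow.not_lt_of_neighborSet_inter_compl (h : MaxDelayedCausalFlow G I O g lt)
    {u v w : V} (hu : u ∉ O) (hv : v ∈ O \ I) (hN : G.neighborSet v ∩ Oᶜ = {u}) (hw : w ∉ O) :
    ¬ lt u w := by
  classical
  intro huw
  have hf : IsCausalFlow G I O (Function.update g u v) (outputsLast O {u} lt) :=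
    h.1.outputsLast (fun i hi => Function.update_of_ne hi v g)
      (by rintro i rfl -; simpa using ⟨hv, hN⟩)
  have hu2 : u ∉ rest (outputsLast O {u} lt) 2 := by
    intro hu2
    obtain ⟨-, b, hb, -, hbO | ⟨hne, -⟩⟩ := mem_rest_succ.1 hu2
    · exact rest_one_subset_compl (fun _ _ hab => hab.1) hb hbO
    · exact hne rfl
  rw [h.rest_eq hf (rest_outputsLast_subset h.1.compl_subset_rest_one _) 2] at hu2
  exact hu2 (mem_rest_succ.2 ⟨h.rest_one ▸ hu, w, h.rest_one ▸ hw, huw⟩)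

end CausalFlow

theorem max_delayed_causal_layer_one {V : Type*} [Fintype V] (G : SimpleGraph V)
    (I O : Set V) (g : V → V) (lt : V → V → Prop)
    (h : MaxDelayedCausalFlow G I O g lt) :
    layer lt 1 = {u | u ∉ O ∧ ∃ v ∈ O \ I, G.neighborSet v ∩ Oᶜ = {u}} := by
  ext u
  simp only [layer, maxSet, h.rest_one, mem_compl_iff, mem_ofPred_eq]
  refine and_congr_right fun hu => ⟨fun hmax => ⟨g u, h.1.neighborSet_flow_inter_compl hu hmax⟩, ?_⟩
  rintro ⟨v, hv, hN⟩ w hw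
  exact h.not_lt_of_neighborSet_inter_compl hu hv hN hw
end

section
/- If (g,≺) is a maximally delayed gflow of (G,I,O), then (g̃, ≺̃), where g̃ is the restriction of g to V ∖ (V₀^≺ ∪ V₁^≺) and ≺̃ = ≺ ∖ (V₁^≺ × V₀^≺), is a maximally delayed gflow of (G, I, O ∪ V₁^≺). -/
open Set

variable {V : Type*}

/-! ### Auxiliary definitions -/

/-- `lt''` with all pairs whose source lies in `A` removed. -/
abbrev restrictRel (A : Set V) (r : V → V → Prop) : V → V → Prop :=
  fun a b => r a b ∧ a ∉ A

/-- transitive closure of `r ∪ (L1 × L0)` when `r` has no sources in `L0 ∪ L1`. -/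
abbrev combRel (L0 L1 : Set V) (r : V → V → Prop) : V → V → Prop :=
  fun a c => r a c ∨ (a ∈ L1 ∧ c ∈ L0) ∨ (c ∈ L0 ∧ ∃ b, b ∈ L1 ∧ r a b)

open Classical in
/-- combined correction function. -/
noncomputable def combG (L1 : Set V) (g g'' : V → Set V) : V → Set V :=
  fun i => if i ∈ L1 then g i else g'' i

/-! ### Basic lemmas on `rest`, `maxSet`, `cumul` -/

lemma rest_zero (lt : V → V → Prop) : rest lt 0 = Set.univ := rfl

lemma rest_succ (lt : V → V → Prop) (k : ℕ) :
    rest lt (k+1) = rest lt k \ layer lt k := rfl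

lemma mem_maxSet {lt : V → V → Prop} {S : Set V} {u : V} :
    u ∈ maxSet lt S ↔ u ∈ S ∧ ∀ v ∈ S, ¬ lt u v := Iff.rfl

lemma cumul_eq (lt : V → V → Prop) (k : ℕ) :
    cumul lt k = Set.univ \ rest lt (k+1) := rfl

lemma rest_add_subset (lt : V → V → Prop) (k : ℕ) :
    ∀ j, rest lt (k + j) ⊆ rest lt k := by
  intro j
  induction j with
  | zero => exact Set.Subset.rfl
  | succ n ih => exact Set.diff_subset.trans ih

lemma rest_mono {lt ltb : V → V → Prop} (h : ∀ a b, lt a b → ltb a b) :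
    ∀ k, rest lt k ⊆ rest ltb k := by
  intro k
  induction k with
  | zero => exact Set.Subset.rfl
  | succ n ih =>
    rintro u ⟨hu1, hu2⟩
    exact ⟨ih hu1, fun hm => hu2 ⟨hu1, fun v hv hlt => hm.2 v (ih hv) (h _ _ hlt)⟩⟩

lemma maxSet_congr {lt ltb : V → V → Prop} {S : Set V}
    (h : ∀ u ∈ S, ∀ v, lt u v ↔ ltb u v) :
    maxSet lt S = maxSet ltb S := by
  ext u
  exact ⟨fun h' => ⟨h'.1, fun v hv hl => h'.2 v hv ((h u h'.1 v).mpr hl)⟩,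
    fun h' => ⟨h'.1, fun v hv hl => h'.2 v hv ((h u h'.1 v).mp hl)⟩⟩

lemma rest_eq_of_agree {lt ltb : V → V → Prop} {m n : ℕ}
    (hbase : rest lt m = rest ltb n)
    (hagree : ∀ u ∈ rest lt m, ∀ v, lt u v ↔ ltb u v) :
    ∀ j, rest lt (m + j) = rest ltb (n + j) := by
  intro j
  induction j with
  | zero => simpa using hbase
  | succ k ih =>
    show rest lt (m+k) \ maxSet lt (rest lt (m+k))
        = rest ltb (n+k) \ maxSet ltb (rest ltb (n+k))
    rw [← ih,
      maxSet_congr (fun u hu v => hagree u (rest_add_subset lt m k hu) v)]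

/-! ### Layer structure of the restricted order -/

lemma not_layer0_of_layer1 {lt : V → V → Prop} {u : V} (hu : u ∈ layer lt 1) :
    u ∉ layer lt 0 := fun h0 => hu.1.2 h0

lemma layer1_lt_mem_layer0 {lt : V → V → Prop} {u v : V}
    (hu : u ∈ layer lt 1) (huv : lt u v) : v ∈ layer lt 0 := by
  by_contra hv
  exact hu.2 v ⟨Set.mem_univ v, hv⟩ huv

lemma maxSet_newlt (lt : V → V → Prop) :
    maxSet (fun a b => lt a b ∧ ¬(a ∈ layer lt 1 ∧ b ∈ layer lt 0)) Set.univ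
      = layer lt 0 ∪ layer lt 1 := by
  ext u
  constructor
  · intro hu
    by_contra hc
    have h0 : u ∉ layer lt 0 := fun h => hc (Or.inl h)
    have h1 : u ∉ layer lt 1 := fun h => hc (Or.inr h)
    have hr : u ∈ rest lt 1 := ⟨Set.mem_univ u, h0⟩
    have hex : ¬ (∀ v ∈ rest lt 1, ¬ lt u v) := fun hall => h1 ⟨hr, hall⟩
    push_neg at hex
    obtain ⟨v, hv, hlt⟩ := hex
    exact hu.2 v (Set.mem_univ v) ⟨hlt, fun hp => h1 hp.1⟩
  · rintro (h0 | h1)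
    · exact ⟨Set.mem_univ u, fun v _ hlt => h0.2 v (Set.mem_univ v) hlt.1⟩
    · exact ⟨Set.mem_univ u, fun v _ hlt =>
        hlt.2 ⟨h1, layer1_lt_mem_layer0 h1 hlt.1⟩⟩

lemma rest_newlt_base (lt : V → V → Prop) :
    rest (fun a b => lt a b ∧ ¬(a ∈ layer lt 1 ∧ b ∈ layer lt 0)) 1 = rest lt 2 := by
  have h2 : rest lt 2 = (Set.univ \ layer lt 0) \ layer lt 1 := rfl
  have h1 : rest (fun a b => lt a b ∧ ¬(a ∈ layer lt 1 ∧ b ∈ layer lt 0)) 1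
      = Set.univ \ maxSet (fun a b => lt a b ∧ ¬(a ∈ layer lt 1 ∧ b ∈ layer lt 0)) Set.univ := rfl
  rw [h1, h2, maxSet_newlt, Set.diff_diff]

lemma cumul_newlt (lt : V → V → Prop) (k : ℕ) :
    cumul (fun a b => lt a b ∧ ¬(a ∈ layer lt 1 ∧ b ∈ layer lt 0)) k
      = cumul lt (k+1) := by
  have hagree : ∀ u ∈ rest (fun a b => lt a b ∧ ¬(a ∈ layer lt 1 ∧ b ∈ layer lt 0)) 1,
      ∀ v, (lt u v ∧ ¬(u ∈ layer lt 1 ∧ v ∈ layer lt 0)) ↔ lt u v := by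
    intro u hu v
    rw [rest_newlt_base] at hu
    have hu2 : u ∉ layer lt 1 := hu.2
    exact ⟨fun h => h.1, fun h => ⟨h, fun hp => hu2 hp.1⟩⟩
  have h := rest_eq_of_agree (rest_newlt_base lt) hagree k
  have hidx : 2 + k = k + 1 + 1 := by omega
  have hidx' : 1 + k = k + 1 := by omega
  rw [hidx, hidx'] at h
  rw [cumul_eq, cumul_eq, h]

lemma cumul_zero (lt : V → V → Prop) : cumul lt 0 = layer lt 0 := by
  have h : cumul lt 0 = Set.univ \ (Set.univ \ maxSet lt Set.univ) := rfl
  rw [h, Set.diff_diff_cancel_left (Set.subset_univ _)]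
  rfl

lemma layer0_subset_O {G : SimpleGraph V} {I O : Set V} {g : V → Set V}
    {lt : V → V → Prop} (hg : IsGFlow G I O g lt) : layer lt 0 ⊆ O := by
  intro u hu
  by_contra hO
  obtain ⟨j, hj⟩ := (hg.2.1 u hO).1
  exact hu.2 j (Set.mem_univ j) (hg.2.2.1 u hO j hj)

/-! ### The combined order -/

lemma combRel_not_of_mem {A L0 L1 : Set V} {r : V → V → Prop}
    (hL0A : L0 ⊆ A) (h01 : ∀ u ∈ L1, u ∉ L0) {a : V} (ha : a ∈ L0) (c : V) :
    ¬ combRel L0 L1 (restrictRel A r) a c := by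
  rintro (⟨-, hout⟩ | ⟨h1, -⟩ | ⟨-, b, -, -, hout⟩)
  · exact hout (hL0A ha)
  · exact h01 a h1 ha
  · exact hout (hL0A ha)

lemma combRel_spo {A L0 L1 : Set V} {r : V → V → Prop}
    (hL0A : L0 ⊆ A) (h01 : ∀ u ∈ L1, u ∉ L0) (hspo : IsSPO r) :
    IsSPO (combRel L0 L1 (restrictRel A r)) := by
  constructor
  · intro a ha
    rcases ha with ⟨h, -⟩ | ⟨h1, h0⟩ | ⟨h0, b, -, -, hout⟩
    · exact hspo.1 a h
    · exact h01 a h1 h0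
    · exact hout (hL0A h0)
  · rintro a b c hab hbc
    have hb0 : b ∉ L0 := fun hb => combRel_not_of_mem hL0A h01 hb c hbc
    have hab' : r a b ∧ a ∉ A := by
      rcases hab with h | ⟨-, h0⟩ | ⟨h0, -⟩
      · exact h
      · exact absurd h0 hb0
      · exact absurd h0 hb0
    rcases hbc with ⟨h, -⟩ | ⟨hb1, hc0⟩ | ⟨hc0, d, hd1, hbd, -⟩
    · exact Or.inl ⟨hspo.2 a b c hab'.1 h, hab'.2⟩
    · exact Or.inr (Or.inr ⟨hc0, b, hb1, hab'⟩)
    · exact Or.inr (Or.inr ⟨hc0, d, hd1, hspo.2 a b d hab'.1 hbd, hab'.2⟩)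

lemma rest_comb_subset {A L0 L1 : Set V} {r : V → V → Prop}
    (hL0A : L0 ⊆ A) (h01 : ∀ u ∈ L1, u ∉ L0) :
    ∀ k, rest (combRel L0 L1 (restrictRel A r)) (k+1)
        ⊆ rest (restrictRel A r) k \ L0 := by
  intro k
  induction k with
  | zero =>
    rintro u ⟨hu1, hu2⟩
    refine ⟨Set.mem_univ u, fun h0 => ?_⟩
    exact hu2 ⟨hu1, fun v hv hc => combRel_not_of_mem hL0A h01 h0 v hc⟩
  | succ k ih =>
    rintro u ⟨hu1, hu2⟩
    obtain ⟨huS, hu0⟩ := ih hu1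
    refine ⟨⟨huS, fun hm => hu2 ⟨hu1, fun v hv hc => ?_⟩⟩, hu0⟩
    obtain ⟨hvS, hv0⟩ := ih hv
    rcases hc with hR | ⟨-, h0⟩ | ⟨h0, -⟩
    · exact hm.2 v hvS hR
    · exact hv0 h0
    · exact hv0 h0

lemma cumul_comb_ge {A L0 L1 : Set V} {r : V → V → Prop}
    (hL0A : L0 ⊆ A) (h01 : ∀ u ∈ L1, u ∉ L0) (k : ℕ) :
    cumul (restrictRel A r) k ⊆ cumul (combRel L0 L1 (restrictRel A r)) (k+1) := by
  rintro u ⟨-, hu⟩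
  exact ⟨Set.mem_univ u, fun hr => hu (rest_comb_subset hL0A h01 (k+1) hr).1⟩

lemma cumul_comb_zero {A L0 L1 : Set V} {r : V → V → Prop}
    (hL0A : L0 ⊆ A) (h01 : ∀ u ∈ L1, u ∉ L0) :
    L0 ⊆ cumul (combRel L0 L1 (restrictRel A r)) 0 := by
  intro u hu
  exact ⟨Set.mem_univ u, fun hr => (rest_comb_subset hL0A h01 0 hr).2 hu⟩

lemma cumul_restrict_ge {A : Set V} {r : V → V → Prop} (k : ℕ) :
    cumul r k ⊆ cumul (restrictRel A r) k := by
  rintro u ⟨-, hu⟩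
  exact ⟨Set.mem_univ u, fun hr => hu (rest_mono (fun a b hab => hab.1) (k+1) hr)⟩

lemma restrict_gflow {G : SimpleGraph V} {I O' : Set V} {g'' : V → Set V}
    {lt'' : V → V → Prop} (hg : IsGFlow G I O' g'' lt'') :
    IsGFlow G I O' g'' (restrictRel O' lt'') := by
  obtain ⟨⟨hirr, htr⟩, h1, h2, h3, h4⟩ := hg
  refine ⟨⟨fun a ha => hirr a ha.1,
    fun a b c hab hbc => ⟨htr a b c hab.1 hbc.1, hab.2⟩⟩, h1, ?_, ?_, h4⟩
  · exact fun i hi j hj => ⟨h2 i hi j hj, hi⟩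
  · intro i hi j hj
    rcases h3 i hi j hj with he | hlt
    · exact Or.inl he
    · exact Or.inr ⟨hlt, hi⟩

lemma combG_gflow {G : SimpleGraph V} {I O : Set V} {g g'' : V → Set V}
    {lt lt'' : V → V → Prop}
    (hgf : IsGFlow G I O g lt)
    (hgf'' : IsGFlow G I (O ∪ layer lt 1) g'' lt'') :
    IsGFlow G I O (combG (layer lt 1) g g'')
      (combRel (layer lt 0) (layer lt 1)
        (restrictRel (O ∪ layer lt 1) lt'')) := by
  classical
  have hL0A : layer lt 0 ⊆ O ∪ layer lt 1 := fun u hu => Or.inl (layer0_subset_O hgf hu)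
  have h01 : ∀ u ∈ layer lt 1, u ∉ layer lt 0 := fun u hu => not_layer0_of_layer1 hu
  have hgR := restrict_gflow hgf''
  obtain ⟨-, hR1, hR2, hR3, hR4⟩ := hgR
  refine ⟨combRel_spo hL0A h01 hgf''.1, ?_, ?_, ?_, ?_⟩
  · intro i hi
    by_cases hi1 : i ∈ layer lt 1
    · simp only [combG, if_pos hi1]
      exact hgf.2.1 i hi
    · simp only [combG, if_neg hi1]
      exact hR1 i (fun h => h.elim hi hi1)
  · intro i hi j hj
    by_cases hi1 : i ∈ layer lt 1
    · simp only [combG, if_pos hi1] at hj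
      exact Or.inr (Or.inl ⟨hi1, layer1_lt_mem_layer0 hi1 (hgf.2.2.1 i hi j hj)⟩)
    · simp only [combG, if_neg hi1] at hj
      exact Or.inl (hR2 i (fun h => h.elim hi hi1) j hj)
  · intro i hi j hj
    by_cases hi1 : i ∈ layer lt 1
    · simp only [combG, if_pos hi1] at hj
      rcases hgf.2.2.2.1 i hi j hj with he | hlt
      · exact Or.inl he
      · exact Or.inr (Or.inr (Or.inl ⟨hi1, layer1_lt_mem_layer0 hi1 hlt⟩))
    · simp only [combG, if_neg hi1] at hj
      rcases hR3 i (fun h => h.elim hi hi1) j hj with he | hlt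
      · exact Or.inl he
      · exact Or.inr (Or.inl hlt)
  · intro i hi
    by_cases hi1 : i ∈ layer lt 1
    · simp only [combG, if_pos hi1]
      exact hgf.2.2.2.2 i hi
    · simp only [combG, if_neg hi1]
      exact hR4 i (fun h => h.elim hi hi1)

/-! ### Main theorem -/

theorem max_delayed_gflow_restriction {V : Type*} [Fintype V] (G : SimpleGraph V)
    (I O : Set V) (g : V → Set V) (lt : V → V → Prop)
    (h : MaxDelayedGFlow G I O g lt) :
    MaxDelayedGFlow G I (O ∪ layer lt 1) g
      (fun a b => lt a b ∧ ¬(a ∈ layer lt 1 ∧ b ∈ layer lt 0)) := by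
  classical
  obtain ⟨hgf, hmaxd⟩ := h
  obtain ⟨⟨hirr, htrans⟩, hgI, hgm, hodd, hself⟩ := hgf
  have hgf' : IsGFlow G I O g lt := ⟨⟨hirr, htrans⟩, hgI, hgm, hodd, hself⟩
  constructor
  · -- the restricted pair is a gflow of the new open graph
    refine ⟨⟨fun a ha => hirr a ha.1,
        fun a b c hab hbc => ⟨htrans a b c hab.1 hbc.1, ?_⟩⟩, ?_, ?_, ?_, ?_⟩
    · rintro ⟨ha1, -⟩
      exact hab.2 ⟨ha1, layer1_lt_mem_layer0 ha1 hab.1⟩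
    · exact fun i hi => hgI i (fun hO => hi (Or.inl hO))
    · intro i hi j hj
      exact ⟨hgm i (fun hO => hi (Or.inl hO)) j hj, fun hp => hi (Or.inr hp.1)⟩
    · intro i hi j hj
      rcases hodd i (fun hO => hi (Or.inl hO)) j hj with he | hlt
      · exact Or.inl he
      · exact Or.inr ⟨hlt, fun hp => hi (Or.inr hp.1)⟩
    · exact fun i hi => hself i (fun hO => hi (Or.inl hO))
  · -- maximal delayedness
    intro g'' lt'' hgf'' hMD
    have hL0A : layer lt 0 ⊆ O ∪ layer lt 1 :=
      fun u hu => Or.inl (layer0_subset_O hgf' hu)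
    have h01 : ∀ u ∈ layer lt 1, u ∉ layer lt 0 :=
      fun u hu => not_layer0_of_layer1 hu
    -- the combined gflow of the original open graph
    have hgfC := combG_gflow hgf' hgf''
    refine hmaxd _ _ hgfC ⟨?_, ?_⟩
    · -- all cumulative layers at least as big
      intro k
      cases k with
      | zero =>
        rw [cumul_zero]
        exact Set.ncard_le_ncard (cumul_comb_zero hL0A h01) (Set.toFinite _)
      | succ k =>
        calc (cumul lt (k+1)).ncard
            = (cumul (fun a b => lt a b ∧ ¬(a ∈ layer lt 1 ∧ b ∈ layer lt 0)) k).ncard := by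
              rw [cumul_newlt]
          _ ≤ (cumul lt'' k).ncard := hMD.1 k
          _ ≤ (cumul (restrictRel (O ∪ layer lt 1) lt'') k).ncard :=
              Set.ncard_le_ncard (cumul_restrict_ge k) (Set.toFinite _)
          _ ≤ (cumul (combRel (layer lt 0) (layer lt 1)
                (restrictRel (O ∪ layer lt 1) lt'')) (k+1)).ncard :=
              Set.ncard_le_ncard (cumul_comb_ge hL0A h01 k) (Set.toFinite _)
    · -- strictly bigger somewhere
      obtain ⟨k, hk⟩ := hMD.2
      refine ⟨k+1, ?_⟩
      calc (cumul lt (k+1)).ncard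
          = (cumul (fun a b => lt a b ∧ ¬(a ∈ layer lt 1 ∧ b ∈ layer lt 0)) k).ncard := by
            rw [cumul_newlt]
        _ < (cumul lt'' k).ncard := hk
        _ ≤ (cumul (restrictRel (O ∪ layer lt 1) lt'') k).ncard :=
            Set.ncard_le_ncard (cumul_restrict_ge k) (Set.toFinite _)
        _ ≤ (cumul (combRel (layer lt 0) (layer lt 1)
              (restrictRel (O ∪ layer lt 1) lt'')) (k+1)).ncard :=
            Set.ncard_le_ncard (cumul_comb_ge hL0A h01 k) (Set.toFinite _)
end

section
/- Let (G,I,O) be an open graph and define S₀ = O, S_{k+1} = S_k ∪ { u ∈ V∖S_k : ∃v ∈ S_k ∖ (I ∪ C_k), N(v) ∩ (V∖S_k) = {u} }, where C_k is the set of vertices already used as correctors at earlier stages (each corrector may be used at most once). Then (G,I,O) has a causal flow if and only if this iteration, choosing at each stage all possible new correctable vertices, reaches S_k = V. -/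
open Set

variable {V : Type*}

def SC (G : SimpleGraph V) (I O : Set V) : ℕ → Set V × Set V
  | 0 => (O, ∅)
  | k+1 =>
    let S := (SC G I O k).1
    let C := (SC G I O k).2
    let C' := {v | v ∈ S \ (I ∪ C) ∧ ∃ u, G.neighborSet v ∩ Sᶜ = {u}}
    (S ∪ ⋃ v ∈ C', G.neighborSet v ∩ Sᶜ, C ∪ C')

section AuxFlow

variable {V : Type*} (G : SimpleGraph V) (I O : Set V)

lemma SC_succ (k : ℕ) :
    SC G I O (k+1) =
      ((SC G I O k).1 ∪
        ⋃ v ∈ {v | v ∈ (SC G I O k).1 \ (I ∪ (SC G I O k).2) ∧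
          ∃ u, G.neighborSet v ∩ ((SC G I O k).1)ᶜ = {u}},
          G.neighborSet v ∩ ((SC G I O k).1)ᶜ,
       (SC G I O k).2 ∪ {v | v ∈ (SC G I O k).1 \ (I ∪ (SC G I O k).2) ∧
          ∃ u, G.neighborSet v ∩ ((SC G I O k).1)ᶜ = {u}}) := rfl

lemma S_subset_succ (k : ℕ) : (SC G I O k).1 ⊆ (SC G I O (k+1)).1 := by
  rw [SC_succ]; exact Set.subset_union_left

lemma S_mono {m k : ℕ} (h : m ≤ k) : (SC G I O m).1 ⊆ (SC G I O k).1 := by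
  induction k with
  | zero => simp_all
  | succ k ih =>
    rcases Nat.lt_or_ge m (k+1) with h' | h'
    · exact (ih (Nat.lt_succ_iff.mp h')).trans (S_subset_succ G I O k)
    · have : m = k + 1 := le_antisymm h h'
      subst this; rfl

lemma C_neighbors (k : ℕ) : ∀ v ∈ (SC G I O k).2, G.neighborSet v ⊆ (SC G I O k).1 := by
  induction k with
  | zero => intro v hv; exact absurd hv (by simp [SC])
  | succ k ih =>
    intro v hv
    rw [SC_succ] at hv
    rcases hv with hv | hv
    · exact (ih v hv).trans (S_subset_succ G I O k)
    · obtain ⟨hvS, u, hu⟩ := hv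
      intro w hw
      rcases Classical.em (w ∈ (SC G I O k).1) with hws | hws
      · exact S_subset_succ G I O k hws
      · have hw' : w ∈ G.neighborSet v ∩ ((SC G I O k).1)ᶜ := ⟨hw, hws⟩
        rw [SC_succ]
        refine Or.inr ?_
        exact Set.mem_biUnion (show v ∈ _ from ⟨hvS, u, hu⟩) hw'

lemma exists_maximal_of_spo {V : Type*} [Finite V] (lt : V → V → Prop)
    (h : IsSPO lt) (T : Set V) (hT : T.Nonempty) :
    ∃ u ∈ T, ∀ v ∈ T, ¬ lt u v := by
  letI : IsTrans V (fun a b => lt b a) := ⟨fun a b c hab hbc => h.2 _ _ _ hbc hab⟩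
  letI : IsIrrefl V (fun a b => lt b a) := ⟨fun a => h.1 a⟩
  have wf := Finite.wellFounded_of_trans_of_irrefl (fun a b : V => lt b a)
  obtain ⟨u, hu, hmin⟩ := wf.has_min T hT
  exact ⟨u, hu, fun v hv => hmin v hv⟩

lemma S_grows {V : Type*} [Fintype V] (G : SimpleGraph V) (I O : Set V)
    (g : V → V) (lt : V → V → Prop) (hf : IsCausalFlow G I O g lt) (k : ℕ)
    (hne : (SC G I O k).1 ≠ Set.univ) :
    ∃ u, u ∉ (SC G I O k).1 ∧ u ∈ (SC G I O (k+1)).1 := by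
  obtain ⟨hspo, hgI, hlt, hnbr, hadj⟩ := hf
  set S := (SC G I O k).1 with hS
  have hTne : Sᶜ.Nonempty := by
    rw [Set.nonempty_compl]; exact hne
  obtain ⟨u, huT, humax⟩ := exists_maximal_of_spo lt hspo Sᶜ hTne
  have huS : u ∉ S := huT
  have huO : u ∉ O := fun h => huS (S_mono G I O (Nat.zero_le k) h)
  -- g u is in S
  have hguS : g u ∈ S := by
    by_contra hc
    exact humax (g u) hc (hlt u huO)
  -- neighbors of g u outside S equal {u}
  have hkey : G.neighborSet (g u) ∩ Sᶜ = {u} := by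
    apply Set.eq_singleton_iff_unique_mem.mpr
    constructor
    · exact ⟨hadj u huO, huS⟩
    · rintro j ⟨hj1, hj2⟩
      rcases hnbr u huO j hj1 with h | h
      · exact h
      · exact absurd h (humax j hj2)
  have hguC : g u ∉ (SC G I O k).2 := by
    intro hc
    exact huS (C_neighbors G I O k (g u) hc (hadj u huO))
  refine ⟨u, huS, ?_⟩
  rw [SC_succ]
  refine Or.inr (Set.mem_biUnion (show g u ∈ _ from ⟨⟨hguS, ?_⟩, u, hkey⟩) ?_)
  · rintro (h | h)
    · exact hgI u huO h
    · exact hguC h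
  · exact ⟨hadj u huO, huS⟩

end AuxFlow

theorem causal_flow_iff_SC_saturates {V : Type*} [Fintype V] (G : SimpleGraph V)
    (I O : Set V) :
    (∃ (g : V → V) (lt : V → V → Prop), IsCausalFlow G I O g lt) ↔
    ∃ k, (SC G I O k).1 = Set.univ := by
  constructor
  · rintro ⟨g, lt, hf⟩
    have hgrow : ∀ k : ℕ, (SC G I O k).1 = Set.univ ∨ k ≤ ((SC G I O k).1).ncard := by
      intro k
      induction k with
      | zero => exact Or.inr (Nat.zero_le _)
      | succ k ih =>
        rcases ih with h | h
        · left
          apply Set.eq_univ_of_univ_subset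
          rw [← h]; exact S_subset_succ G I O k
        · rcases Classical.em ((SC G I O k).1 = Set.univ) with hu | hu
          · left
            apply Set.eq_univ_of_univ_subset
            rw [← hu]; exact S_subset_succ G I O k
          · right
            obtain ⟨u, hu1, hu2⟩ := S_grows G I O g lt hf k hu
            have hss : (SC G I O k).1 ⊂ (SC G I O (k+1)).1 :=
              ⟨S_subset_succ G I O k, fun hsub => hu1 (hsub hu2)⟩
            have := Set.ncard_lt_ncard hss (Set.toFinite _)
            omega
    rcases hgrow (Fintype.card V + 1) with h | h
    · exact ⟨_, h⟩
    · exfalso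
      have hle : ((SC G I O (Fintype.card V + 1)).1).ncard ≤ Fintype.card V := by
        have h1 := Set.ncard_le_ncard
          (Set.subset_univ ((SC G I O (Fintype.card V + 1)).1)) (Set.toFinite _)
        rwa [Set.ncard_univ, Nat.card_eq_fintype_card] at h1
      omega
  · rintro ⟨k, hk⟩
    classical
    -- stage of a vertex
    set stage : V → ℕ := fun u => sInf {n | u ∈ (SC G I O n).1} with hstage
    have hstage_ne : ∀ u : V, ({n | u ∈ (SC G I O n).1}).Nonempty := by
      intro u; exact ⟨k, by simp [hk]⟩
    have hstage_mem : ∀ u : V, u ∈ (SC G I O (stage u)).1 := fun u =>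
      Nat.sInf_mem (hstage_ne u)
    have hstage_le : ∀ u : V, ∀ n, u ∈ (SC G I O n).1 → stage u ≤ n := fun u n h =>
      Nat.sInf_le h
    have hstage_not : ∀ u : V, ∀ n, n < stage u → u ∉ (SC G I O n).1 := by
      intro u n hn hu
      exact absurd (hstage_le u n hu) (Nat.not_le.mpr hn)
    -- key: every non-output vertex has a corrector
    have hkey : ∀ u : V, u ∉ O → ∃ v m, stage u = m + 1 ∧ v ∈ (SC G I O m).1 ∧
        v ∉ I ∧ G.neighborSet v ∩ ((SC G I O m).1)ᶜ = {u} := by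
      intro u huO
      have h0 : stage u ≠ 0 := by
        intro h
        have := hstage_mem u
        rw [h] at this
        exact huO this
      obtain ⟨m, hm'⟩ := Nat.exists_eq_succ_of_ne_zero h0
      have hm : stage u = m + 1 := hm'
      have humem : u ∈ (SC G I O (m+1)).1 := by rw [← hm]; exact hstage_mem u
      have hunot : u ∉ (SC G I O m).1 := hstage_not u m (by omega)
      rw [SC_succ] at humem
      rcases humem with h | h
      · exact absurd h hunot
      · obtain ⟨v, hv, hu⟩ := Set.mem_iUnion₂.mp h
        obtain ⟨⟨hvS, hvIC⟩, w, hw⟩ := hv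
        have : u = w := by
          have := hw ▸ hu
          exact this
        subst this
        exact ⟨v, m, hm, hvS, fun hI => hvIC (Or.inl hI), hw⟩
    choose! v0 m0 hm0 hvS0 hvI0 hnbr0 using hkey
    refine ⟨v0, fun x y => stage y < stage x, ⟨⟨fun a => lt_irrefl _, fun a b c h1 h2 =>
      lt_trans h2 h1⟩, ?_, ?_, ?_, ?_⟩⟩
    · intro i hi; exact hvI0 i hi
    · intro i hi
      have h1 : stage (v0 i) ≤ m0 i := hstage_le _ _ (hvS0 i hi)
      have h2 : stage i = m0 i + 1 := hm0 i hi
      omega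
    · intro i hi j hj
      rcases Classical.em (j ∈ (SC G I O (m0 i)).1) with h | h
      · right
        have h1 : stage j ≤ m0 i := hstage_le _ _ h
        have h2 : stage i = m0 i + 1 := hm0 i hi
        omega
      · left
        have : j ∈ G.neighborSet (v0 i) ∩ ((SC G I O (m0 i)).1)ᶜ := ⟨hj, h⟩
        rw [hnbr0 i hi] at this
        exact this
    · intro i hi
      have : i ∈ G.neighborSet (v0 i) ∩ ((SC G I O (m0 i)).1)ᶜ := by
        rw [hnbr0 i hi]; rfl
      exact this.1
end
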